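/- arXiv:1711.01834 — 7 statements merged into one kernel-verified Lean document; each statement's English description precedes it below -/
import Mathlib

section
/- Let p ∈ (0,1], b > 0, and let y₁,…,yₙ be real numbers with 0 ≤ yᵢ ≤ p for all i and ∑ᵢ yᵢ ≤ b. Then ∏ᵢ (1 - yᵢ) ≥ (1-p)^{b/p}. -/
/-! Writing `tᵢ = yᵢ / p ∈ [0, 1]`, Bernoulli's inequality for exponents in `[0, 1]` gives
`(1 - p) ^ tᵢ ≤ 1 - tᵢ p = 1 - yᵢ`. Multiplying over `i` bounds the product from below by
`(1 - p) ^ (∑ yᵢ / p)`, and since `1 - p ≤ 1` this only decreases when `∑ yᵢ` is replaced by `b`. -/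

theorem one_sub_rpow_div_le_one_sub {p y : ℝ} (hp : 0 < p) (hp1 : p ≤ 1) (hy : 0 ≤ y)
    (hyp : y ≤ p) : (1 - p) ^ (y / p) ≤ 1 - y := by
  have bernoulli := rpow_one_add_le_one_add_mul_self (s := -p) (by linarith)
    (div_nonneg hy hp.le) ((div_le_one hp).2 hyp)
  rwa [← sub_eq_add_neg, mul_neg, div_mul_cancel₀ y hp.ne', ← sub_eq_add_neg] at bernoulli

theorem stmt_3_general (n : ℕ) (p b : ℝ) (hp : p ∈ Set.Ioc (0:ℝ) 1)
    (y : Fin n → ℝ) (hy : ∀ i, 0 ≤ y i ∧ y i ≤ p)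
    (hsum : ∑ i, y i ≤ b) :
    (1 - p) ^ (b / p) ≤ ∏ i, (1 - y i) := by
  obtain ⟨hp0, hp1⟩ := hp
  have hbase : 0 ≤ 1 - p := sub_nonneg.2 hp1
  have hexp : ∀ i ∈ Finset.univ, 0 ≤ y i / p := fun i _ => div_nonneg (hy i).1 hp0.le
  calc (1 - p) ^ (b / p)
      ≤ (1 - p) ^ (∑ i, y i / p) := by
        rw [← Finset.sum_div]
        exact Real.rpow_le_rpow_of_exponent_ge' hbase (by linarith)
          (div_nonneg (Finset.sum_nonneg fun i _ => (hy i).1) hp0.le) (by gcongr)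
    _ = ∏ i, (1 - p) ^ (y i / p) := Real.rpow_sum_of_nonneg hbase hexp
    _ ≤ ∏ i, (1 - y i) := Finset.prod_le_prod (fun i _ => Real.rpow_nonneg hbase _)
        fun i _ => one_sub_rpow_div_le_one_sub hp0 hp1 (hy i).1 (hy i).2

theorem stmt_3 (n : ℕ) (p b : ℝ) (hp : p ∈ Set.Ioc (0:ℝ) 1) (hb : 0 < b)
    (y : Fin n → ℝ) (hy : ∀ i, 0 ≤ y i ∧ y i ≤ p)
    (hsum : ∑ i, y i ≤ b) :
    (1 - p) ^ (b / p) ≤ ∏ i, (1 - y i) :=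
  stmt_3_general n p b hp y hy hsum
end

section
/- Let X be a nonnegative random variable with E[X] = 1. Let a, c, d be real constants with a ∈ (0,1), c ∈ (0,1], d ∈ (0,1), a·c + d > 1, and a - 1 + d > 0. Suppose ∫₀^a P(X ≥ x) dx > c·a, and let T ≥ 0 satisfy ∫₀^T P(X ≥ x) dx = 1 - d. Then T < a and P(X ≥ T) > (c·a - 1 + d)/(a - 1 + d). -/
open MeasureTheory Set

section SetIntegralIoc

variable {F : ℝ → ℝ} {r s t M : ℝ}

lemma setIntegral_Ioc_le_mul (hst : s ≤ t) (hint : IntegrableOn F (Ioc s t))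
    (hM : ∀ x ∈ Ioc s t, F x ≤ M) : ∫ x in Ioc s t, F x ≤ M * (t - s) := by
  calc ∫ x in Ioc s t, F x
      ≤ ∫ _ in Ioc s t, M :=
        setIntegral_mono_on hint (integrableOn_const measure_Ioc_lt_top.ne) measurableSet_Ioc hM
    _ = M * (t - s) := by
        rw [setIntegral_const, Real.volume_real_Ioc_of_le hst, smul_eq_mul, mul_comm]

lemma setIntegral_Ioc_add_setIntegral_Ioc (hrs : r ≤ s) (hst : s ≤ t)
    (hrs_int : IntegrableOn F (Ioc r s)) (hst_int : IntegrableOn F (Ioc s t)) :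
    (∫ x in Ioc r s, F x) + ∫ x in Ioc s t, F x = ∫ x in Ioc r t, F x := by
  rw [← Ioc_union_Ioc_eq_Ioc hrs hst,
    setIntegral_union (Ioc_disjoint_Ioc_of_le le_rfl) measurableSet_Ioc hrs_int hst_int]

lemma setIntegral_Ioc_mono_right (hF : ∀ x, 0 ≤ F x) (hst : s ≤ t)
    (hint : IntegrableOn F (Ioc r t)) : ∫ x in Ioc r s, F x ≤ ∫ x in Ioc r t, F x :=
  setIntegral_mono_set hint (.of_forall hF) (Ioc_subset_Ioc_right hst).eventuallyLE

end SetIntegralIoc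

namespace Antitone

variable {F : ℝ → ℝ}

lemma integrableOn_Ioc (hF : Antitone F) (s t : ℝ) : IntegrableOn F (Ioc s t) :=
  hF.intervalIntegrable.1

/-- On `(T, a]` the antitone `F` is at most `F T`, while `T ≥ ∫₀ᵀ F = 1 - d` since `F ≤ 1`;
so the mass `∫_T^a F > c a - (1 - d)` forces `F T (a - 1 + d) > c a - 1 + d`. -/
theorem lt_and_div_lt_of_setIntegral_Ioc (hF : Antitone F) (hF0 : ∀ x, 0 ≤ F x)
    (hF1 : ∀ x, F x ≤ 1) {a c d T : ℝ} (hacd : a * c + d > 1) (had : a - 1 + d > 0)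
    (hbig : ∫ x in Ioc 0 a, F x > c * a) (hT : 0 ≤ T) (hTd : ∫ x in Ioc 0 T, F x = 1 - d) :
    T < a ∧ F T > (c * a - 1 + d) / (a - 1 + d) := by
  have hTa : T < a := by
    by_contra! haT
    have := setIntegral_Ioc_mono_right hF0 haT (hF.integrableOn_Ioc 0 T)
    linarith
  have hT_ge : 1 - d ≤ T := by
    have := setIntegral_Ioc_le_mul hT (hF.integrableOn_Ioc 0 T) fun x _ => hF1 x
    linarith
  have htail_lt : c * a - (1 - d) < ∫ x in Ioc T a, F x := by
    have := setIntegral_Ioc_add_setIntegral_Ioc hT hTa.le (hF.integrableOn_Ioc 0 T)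
      (hF.integrableOn_Ioc T a)
    linarith
  have htail_le : ∫ x in Ioc T a, F x ≤ F T * (a - T) :=
    setIntegral_Ioc_le_mul hTa.le (hF.integrableOn_Ioc T a) fun x hx => hF hx.1.le
  refine ⟨hTa, (div_lt_iff₀ had).2 ?_⟩
  nlinarith [hF0 T]

end Antitone

lemma antitone_measureReal_setOf_le {Ω : Type*} [MeasurableSpace Ω] (μ : Measure Ω)
    [IsFiniteMeasure μ] (X : Ω → ℝ) : Antitone fun x => μ.real {ω | x ≤ X ω} :=
  fun _ _ hxy => measureReal_mono fun _ hω => hxy.trans hω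

theorem stmt_7_general {Ω : Type*} [MeasurableSpace Ω] (μ : Measure Ω) [IsProbabilityMeasure μ]
    (X : Ω → ℝ)
    (a c d : ℝ) (hacd : a * c + d > 1) (had : a - 1 + d > 0)
    (hbig : ∫ x in Set.Ioc (0:ℝ) a, (μ {ω | x ≤ X ω}).toReal > c * a)
    (T : ℝ) (hT : 0 ≤ T)
    (hTd : ∫ x in Set.Ioc (0:ℝ) T, (μ {ω | x ≤ X ω}).toReal = 1 - d) :
    T < a ∧ (μ {ω | T ≤ X ω}).toReal > (c * a - 1 + d) / (a - 1 + d) :=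
  (antitone_measureReal_setOf_le μ X).lt_and_div_lt_of_setIntegral_Ioc
    (fun _ => measureReal_nonneg) (fun _ => measureReal_le_one) hacd had hbig hT hTd

theorem stmt_7 {Ω : Type*} [MeasurableSpace Ω] (μ : Measure Ω) [IsProbabilityMeasure μ]
    (X : Ω → ℝ) (hX : ∀ ω, 0 ≤ X ω)
    (hE : ∫ x in Set.Ioi (0:ℝ), (μ {ω | x ≤ X ω}).toReal = 1)
    (a c d : ℝ) (ha : a ∈ Set.Ioo (0:ℝ) 1) (hc : c ∈ Set.Ioc (0:ℝ) 1)
    (hd : d ∈ Set.Ioo (0:ℝ) 1) (hacd : a * c + d > 1) (had : a - 1 + d > 0)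
    (hbig : ∫ x in Set.Ioc (0:ℝ) a, (μ {ω | x ≤ X ω}).toReal > c * a)
    (T : ℝ) (hT : 0 ≤ T)
    (hTd : ∫ x in Set.Ioc (0:ℝ) T, (μ {ω | x ≤ X ω}).toReal = 1 - d) :
    T < a ∧ (μ {ω | T ≤ X ω}).toReal > (c * a - 1 + d) / (a - 1 + d) :=
  stmt_7_general μ X a c d hacd had hbig T hT hTd
end

section
/- Let X₁,…,Xₙ be independent nonnegative random variables and T ≥ 0. Suppose each P(Xᵢ ≥ T) < g for some g ∈ (0,1], ∑ᵢ P(Xᵢ ≥ T) < b for some b > 0, and (1-g)^{1/g} = (1-h)^{1/b} for some h ∈ [0,1). Then P(∃ i, Xᵢ ≥ T) ≤ h. -/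
/-!
Writing `pᵢ = P(Xᵢ ≥ T)`, independence gives `P(∀ i, Xᵢ < T) = ∏ᵢ (1 - pᵢ)`. Since `t ↦ (1 - g) ^ t`
is convex, it lies below its chord on `[0, 1]`, i.e. `(1 - g) ^ (p / g) ≤ 1 - p` for `0 ≤ p ≤ g`.
Multiplying over `i` and using `∑ᵢ pᵢ ≤ b` yields
`∏ᵢ (1 - pᵢ) ≥ (1 - g) ^ (b / g) = ((1 - h) ^ (1 / b)) ^ b = 1 - h`.
-/

open MeasureTheory ProbabilityTheory

theorem ProbabilityTheory.iIndepFun.probReal_exists_mem {Ω ι : Type*} [MeasurableSpace Ω]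
    {μ : Measure Ω} [IsProbabilityMeasure μ] [Fintype ι] {β : ι → Type*}
    {mβ : ∀ i, MeasurableSpace (β i)} {X : ∀ i, Ω → β i} (hX : ∀ i, Measurable (X i))
    (hindep : iIndepFun X μ) {S : ∀ i, Set (β i)} (hS : ∀ i, MeasurableSet (S i)) :
    μ.real {ω | ∃ i, X i ω ∈ S i} = 1 - ∏ i, (1 - μ.real (X i ⁻¹' S i)) := by
  have hU : MeasurableSet {ω | ∃ i, X i ω ∈ S i} := by
    rw [Set.ofPred_exists]
    exact MeasurableSet.iUnion fun i => hX i (hS i)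
  have hUc : {ω | ∃ i, X i ω ∈ S i}ᶜ = ⋂ i ∈ Finset.univ, X i ⁻¹' (S i)ᶜ := by
    ext ω; simp
  have hinter : μ.real {ω | ∃ i, X i ω ∈ S i}ᶜ = ∏ i, μ.real (X i ⁻¹' (S i)ᶜ) := by
    simp only [measureReal_def, hUc, ENNReal.toReal_prod,
      hindep.measure_inter_preimage_eq_mul Finset.univ (sets := fun i => (S i)ᶜ)
        fun i _ => (hS i).compl]
  rw [probReal_compl_eq_one_sub hU] at hinter
  simp only [Set.preimage_compl, probReal_compl_eq_one_sub (hX _ (hS _))] at hinter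
  linarith

theorem Real.rpow_le_one_sub_mul {a t : ℝ} (ha : 0 ≤ a) (ht0 : 0 ≤ t) (ht1 : t ≤ 1) :
    a ^ t ≤ 1 - t * (1 - a) := by
  have := Real.geom_mean_le_arith_mean2_weighted (sub_nonneg.2 ht1) ht0 zero_le_one ha
    (sub_add_cancel 1 t)
  rw [Real.one_rpow, one_mul] at this
  linarith

theorem Real.rpow_div_le_prod_one_sub {ι : Type*} (s : Finset ι) {q : ι → ℝ} {g b : ℝ}
    (hg0 : 0 < g) (hg1 : g ≤ 1) (hq0 : ∀ i ∈ s, 0 ≤ q i) (hqg : ∀ i ∈ s, q i ≤ g)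
    (hsum : ∑ i ∈ s, q i ≤ b) :
    (1 - g) ^ (b / g) ≤ ∏ i ∈ s, (1 - q i) := by
  have hbase : 0 ≤ 1 - g := sub_nonneg.2 hg1
  have hexp : ∀ i ∈ s, 0 ≤ q i / g := fun i hi => div_nonneg (hq0 i hi) hg0.le
  calc (1 - g) ^ (b / g)
      ≤ (1 - g) ^ (∑ i ∈ s, q i / g) := by
        rw [← Finset.sum_div]
        exact Real.rpow_le_rpow_of_exponent_ge' hbase (by linarith)
          (div_nonneg (Finset.sum_nonneg hq0) hg0.le) (div_le_div_of_nonneg_right hsum hg0.le)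
    _ = ∏ i ∈ s, (1 - g) ^ (q i / g) := Real.rpow_sum_of_nonneg hbase hexp
    _ ≤ ∏ i ∈ s, (1 - q i) := by
        refine Finset.prod_le_prod (fun i _ => Real.rpow_nonneg hbase _) fun i hi => ?_
        refine (Real.rpow_le_one_sub_mul hbase (hexp i hi) ?_).trans_eq ?_
        · exact (div_le_one hg0).2 (hqg i hi)
        · field_simp; ring

theorem stmt_8_general {Ω : Type*} [MeasurableSpace Ω] (μ : Measure Ω) [IsProbabilityMeasure μ]
    (n : ℕ) (X : Fin n → Ω → ℝ)
    (hmeas : ∀ i, Measurable (X i))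
    (hindep : ProbabilityTheory.iIndepFun X μ)
    (T : ℝ)
    (g b h : ℝ) (hg : g ∈ Set.Ioc (0:ℝ) 1) (hb : 0 < b) (hh : h ∈ Set.Ico (0:ℝ) 1)
    (hlt : ∀ i, (μ {ω | T ≤ X i ω}).toReal < g)
    (hsum : ∑ i, (μ {ω | T ≤ X i ω}).toReal < b)
    (hgh : (1 - g) ^ (1 / g) = (1 - h) ^ (1 / b)) :
    (μ {ω | ∃ i, T ≤ X i ω}).toReal ≤ h := by
  have hunion : (μ {ω | ∃ i, T ≤ X i ω}).toReal = 1 - ∏ i, (1 - (μ {ω | T ≤ X i ω}).toReal) :=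
    hindep.probReal_exists_mem hmeas (S := fun _ => Set.Ici T) fun _ => measurableSet_Ici
  have hprod : (1 - g) ^ (b / g) ≤ ∏ i, (1 - (μ {ω | T ≤ X i ω}).toReal) :=
    Real.rpow_div_le_prod_one_sub _ hg.1 hg.2 (fun _ _ => ENNReal.toReal_nonneg)
      (fun i _ => (hlt i).le) hsum.le
  have hpow : (1 - g) ^ (b / g) = 1 - h := by
    rw [div_eq_mul_one_div, mul_comm, Real.rpow_mul (sub_nonneg.2 hg.2), hgh,
      ← Real.rpow_mul (sub_nonneg.2 hh.2.le), one_div_mul_cancel hb.ne', Real.rpow_one]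
  linarith

theorem stmt_8 {Ω : Type*} [MeasurableSpace Ω] (μ : Measure Ω) [IsProbabilityMeasure μ]
    (n : ℕ) (X : Fin n → Ω → ℝ) (hX : ∀ i ω, 0 ≤ X i ω)
    (hmeas : ∀ i, Measurable (X i))
    (hindep : ProbabilityTheory.iIndepFun X μ)
    (T : ℝ) (hT : 0 ≤ T)
    (g b h : ℝ) (hg : g ∈ Set.Ioc (0:ℝ) 1) (hb : 0 < b) (hh : h ∈ Set.Ico (0:ℝ) 1)
    (hlt : ∀ i, (μ {ω | T ≤ X i ω}).toReal < g)
    (hsum : ∑ i, (μ {ω | T ≤ X i ω}).toReal < b)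
    (hgh : (1 - g) ^ (1 / g) = (1 - h) ^ (1 / b)) :
    (μ {ω | ∃ i, T ≤ X i ω}).toReal ≤ h :=
  stmt_8_general μ n X hmeas hindep T g b h hg hb hh hlt hsum hgh
end

section
/- For all real numbers a ∈ [0,1) and c ∈ (0,1], and all integers n ≥ 1 and k with 1 ≤ k < n(1+ln(1-a))+1, setting α_k = 1/c - (1/c - a)·(e^{(k-1)/n - 1}/(1-a))^c and α_{k+1} = 1/c - (1/c - a)·(e^{k/n - 1}/(1-a))^c, we have (1 - c·α_k)/n - α_k + α_{k+1} ≥ -γ/n², where γ = (1/c - a)·(1-a)^{-c}. -/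
lemma exp_quad_bound (x : ℝ) (h0 : 0 ≤ x) (h1 : x ≤ 1) :
    Real.exp x ≤ 1 + x + x ^ 2 := by
  have hx : |x| ≤ 1 := by rwa [abs_of_nonneg h0]
  have h := Real.exp_bound hx (n := 3) (by norm_num)
  simp [Finset.sum_range_succ, abs_of_nonneg h0] at h
  rw [abs_le] at h
  norm_num [Nat.factorial] at h
  nlinarith [h.2, pow_le_pow_of_le_one h0 h1 (by norm_num : 2 ≤ 3), sq_nonneg x]

theorem stmt_12 (a c : ℝ) (ha : a ∈ Set.Ico (0:ℝ) 1) (hc : c ∈ Set.Ioc (0:ℝ) 1)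
    (n k : ℕ) (hn : 1 ≤ n) (hk : 1 ≤ k)
    (hkn : (k : ℝ) < n * (1 + Real.log (1 - a)) + 1) :
    (1 - c * (1/c - (1/c - a) * (Real.exp ((k - 1 : ℝ)/n - 1) / (1 - a)) ^ c)) / n
      - (1/c - (1/c - a) * (Real.exp ((k - 1 : ℝ)/n - 1) / (1 - a)) ^ c)
      + (1/c - (1/c - a) * (Real.exp ((k : ℝ)/n - 1) / (1 - a)) ^ c)
    ≥ -((1/c - a) * (1 - a) ^ (-c)) / n ^ 2 := by
  obtain ⟨ha0, ha1⟩ := ha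
  obtain ⟨hc0, hc1⟩ := hc
  have h1a : (0:ℝ) < 1 - a := by linarith
  have hn0 : (0:ℝ) < n := by exact_mod_cast hn
  have hrw : ∀ t : ℝ, (Real.exp t / (1 - a)) ^ c
      = Real.exp (c * t) * (1 - a) ^ (-c) := by
    intro t
    rw [Real.div_rpow (Real.exp_pos t).le h1a.le, Real.rpow_neg h1a.le,
      mul_comm c t, Real.exp_mul, div_eq_mul_inv]
  rw [hrw, hrw]
  set t1 : ℝ := ((k:ℝ) - 1)/n - 1 with ht1
  have hsplit : c * ((k:ℝ)/n - 1) = c * t1 + c / n := by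
    rw [ht1]; field_simp; ring
  rw [hsplit, Real.exp_add]
  set B : ℝ := (1 - a) ^ (-c) with hB
  set E : ℝ := Real.exp (c * t1) with hE
  have hB0 : 0 < B := Real.rpow_pos_of_pos h1a _
  have hE0 : 0 < E := Real.exp_pos _
  have hB1 : 1 ≤ B := by
    rw [hB, Real.rpow_def_of_pos h1a, Real.one_le_exp_iff]
    have := Real.log_nonpos (by linarith) (by linarith : 1 - a ≤ 1)
    nlinarith
  clear_value t1 B E
  have hβ : (0:ℝ) < 1/c - a := by
    have : (1:ℝ) ≤ 1/c := by rw [le_div_iff₀ hc0]; linarith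
    linarith
  -- E * B ≤ 1
  have ht1le : t1 ≤ Real.log (1 - a) := by
    have hd : ((k:ℝ) - 1)/n ≤ 1 + Real.log (1 - a) := by
      rw [div_le_iff₀ hn0]; nlinarith [hkn]
    rw [ht1]; linarith
  have hEB : E * B ≤ 1 := by
    have h1 : E ≤ (1 - a) ^ c := by
      rw [hE, Real.rpow_def_of_pos h1a]
      exact Real.exp_le_exp.mpr (by nlinarith [ht1le])
    have h2 : B = ((1 - a) ^ c)⁻¹ := by
      rw [hB, Real.rpow_neg h1a.le]
    rw [h2]
    have hp : (0:ℝ) < (1 - a) ^ c := Real.rpow_pos_of_pos h1a c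
    calc E * ((1 - a) ^ c)⁻¹ ≤ (1 - a) ^ c * ((1 - a) ^ c)⁻¹ := by
          apply mul_le_mul_of_nonneg_right h1 (by positivity)
      _ = 1 := mul_inv_cancel₀ (ne_of_gt hp)
  -- exponential bounds for x = c/n
  have hx0 : (0:ℝ) ≤ c / n := by positivity
  have hx1 : c / n ≤ 1 := by
    rw [div_le_one hn0]
    have : (1:ℝ) ≤ n := by exact_mod_cast hn
    linarith
  have hub : Real.exp (c/n) ≤ 1 + c/n + (c/n)^2 := exp_quad_bound _ hx0 hx1
  have hlb : 1 + c/n ≤ Real.exp (c/n) := by linarith [Real.add_one_le_exp (c/n)]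
  have hcn2 : (c/n)^2 ≤ 1/n^2 := by
    rw [div_pow]
    apply div_le_div_of_nonneg_right ?_ (by positivity)
    · nlinarith
  have hc1c : c * (1/c) = 1 := by field_simp
  have key : (1/c - a) * (E * B) * (c/n + 1 - Real.exp (c/n))
      ≥ -((1/c - a) * B) / n ^ 2 := by
    have hn2 : (0:ℝ) < 1/n^2 := by positivity
    have h1 : Real.exp (c/n) - 1 - c/n ≤ 1/n^2 := by linarith
    have h2 : 0 ≤ Real.exp (c/n) - 1 - c/n := by linarith
    have h3 : (1/c - a) * (E * B) * (Real.exp (c/n) - 1 - c/n)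
        ≤ (1/c - a) * (1/n^2) := by
      calc (1/c - a) * (E * B) * (Real.exp (c/n) - 1 - c/n)
          ≤ ((1/c - a) * 1) * (1/n^2) := by
            apply mul_le_mul ?_ h1 h2 (by positivity)
            exact mul_le_mul_of_nonneg_left hEB hβ.le
        _ = (1/c - a) * (1/n^2) := by ring
    have h5 : (1/c - a) * (1/n^2) ≤ (1/c - a) * B * (1/n^2) := by
      have h50 : 0 ≤ (1/c - a) * (B - 1) * (1/n^2) :=
        mul_nonneg (mul_nonneg hβ.le (by linarith)) hn2.le
      nlinarith [h50]
    have heq : (1/c - a) * (E * B) * (c/n + 1 - Real.exp (c/n))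
        = -((1/c - a) * (E * B) * (Real.exp (c/n) - 1 - c/n)) := by ring
    have heq2 : -((1/c - a) * B) / (n:ℝ)^2 = -((1/c - a) * B * (1/n^2)) := by ring
    rw [heq, heq2, ge_iff_le, neg_le_neg_iff]
    linarith
  have heq3 : (1 - c * (1/c - (1/c - a) * (E * B))) / n
      - (1/c - (1/c - a) * (E * B))
      + (1/c - (1/c - a) * (E * Real.exp (c/n) * B))
      = (1/c - a) * (E * B) * (c/n + 1 - Real.exp (c/n)) := by
    linear_combination (-(1:ℝ)/n) * hc1c
  rw [heq3]
  exact key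
end

section
/- For all reals b ≥ 1, d ∈ (0,1), integer n ≥ 1, and integer k with n(1 - (1/b)ln((b+d-bd)/d)) + 1 < k ≤ n, setting α_k = (1 - e^{b((k-1)/n - 1)})·(b+d-bd)/b and α_{k+1} = (1 - e^{b(k/n - 1)})·(b+d-bd)/b, we have (b + d - bd - b·α_k)/n - α_k + α_{k+1} ≥ -b(b+d-bd)/n². -/
/-!
Write `C = b + d - bd`, `t = b / n` and `E = e^{b((k-1)/n - 1)}`, so that `α_k = (1 - E) C / b`
and `α_{k+1} = (1 - E e^t) C / b`. The claim then reduces to `E (e^t - 1 - t) ≤ t²`.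
Since `k ≤ n` we have `E ≤ e^{-t}`, and `e^{-t} (e^t - 1 - t) = 1 - e^{-t} (1 + t) ≤ 1 - (1 - t)(1 + t) = t²`.
-/

open Real

lemma exp_neg_mul_exp_sub_one_sub_le_sq {t : ℝ} (ht : -1 ≤ t) :
    exp (-t) * (exp t - 1 - t) ≤ t ^ 2 := by
  have hinv : exp (-t) * exp t = 1 := by rw [← exp_add]; simp
  have hlow : 1 - t ≤ exp (-t) := by linarith [add_one_le_exp (-t)]
  nlinarith [mul_le_mul_of_nonneg_right hlow (by linarith : (0 : ℝ) ≤ 1 + t)]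

lemma mul_exp_sub_one_sub_le_sq {t E : ℝ} (ht : -1 ≤ t) (hE : E ≤ exp (-t)) :
    E * (exp t - 1 - t) ≤ t ^ 2 :=
  calc E * (exp t - 1 - t)
      ≤ exp (-t) * (exp t - 1 - t) :=
        mul_le_mul_of_nonneg_right hE (by linarith [add_one_le_exp t])
    _ ≤ t ^ 2 := exp_neg_mul_exp_sub_one_sub_le_sq ht

theorem stmt_13_general (b d : ℝ) (hb : 1 ≤ b) (hd : d ∈ Set.Ioo (0:ℝ) 1)
    (n k : ℕ) (hn : 1 ≤ n)
    (hk2 : k ≤ n) :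
    (b + d - b*d - b * ((1 - Real.exp (b * ((k - 1 : ℝ)/n - 1))) * (b + d - b*d)/b)) / n
      - (1 - Real.exp (b * ((k - 1 : ℝ)/n - 1))) * (b + d - b*d)/b
      + (1 - Real.exp (b * ((k : ℝ)/n - 1))) * (b + d - b*d)/b
    ≥ -(b * (b + d - b*d)) / n ^ 2 := by
  obtain ⟨hd0, hd1⟩ := hd
  have hb0 : 0 < b := by linarith
  have hn0 : (0 : ℝ) < n := by exact_mod_cast hn
  have hkn : (k : ℝ) ≤ n := by exact_mod_cast hk2
  have hC : 0 < b + d - b * d := by nlinarith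
  set E := exp (b * ((k - 1 : ℝ) / n - 1))
  have hshift : exp (b * ((k : ℝ) / n - 1)) = E * exp (b / n) := by
    rw [← exp_add]; congr 1; field_simp; ring
  have hE : E ≤ exp (-(b / n)) := by
    refine exp_le_exp.2 ?_
    rw [show b * ((k - 1 : ℝ) / n - 1) = -(b / n) + b * ((k - n) / n) by field_simp; ring]
    nlinarith [div_nonpos_of_nonpos_of_nonneg (sub_nonpos.2 hkn) hn0.le]
  have hkey := mul_exp_sub_one_sub_le_sq (by linarith [div_pos hb0 hn0]) hE
  rw [hshift, ge_iff_le, ← sub_nonneg]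
  refine (mul_nonneg (div_pos hC hb0).le (sub_nonneg.2 hkey)).trans_eq ?_
  field_simp
  ring

theorem stmt_13 (b d : ℝ) (hb : 1 ≤ b) (hd : d ∈ Set.Ioo (0:ℝ) 1)
    (n k : ℕ) (hn : 1 ≤ n)
    (hk1 : (n : ℝ) * (1 - (1/b) * Real.log ((b + d - b*d)/d)) + 1 < k) (hk2 : k ≤ n) :
    (b + d - b*d - b * ((1 - Real.exp (b * ((k - 1 : ℝ)/n - 1))) * (b + d - b*d)/b)) / n
      - (1 - Real.exp (b * ((k - 1 : ℝ)/n - 1))) * (b + d - b*d)/b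
      + (1 - Real.exp (b * ((k : ℝ)/n - 1))) * (b + d - b*d)/b
    ≥ -(b * (b + d - b*d)) / n ^ 2 :=
  stmt_13_general b d hb hd n k hn hk2
end

section
/- For all integers n ≥ 1 and k with n(1+ln(1-a)) + 1 < k ≤ n where a ∈ [0,1), setting α_k = 1 - e^{(k-1)/n - 1} and α_{k+1} = 1 - e^{k/n - 1}, we have (1 - α_k)/n - α_k + α_{k+1} ≥ -1/n². -/
/-! With `e = exp ((k - 1) / n - 1) ∈ (0, 1]` the left side is `e * (1 + 1/n - exp (1/n))`, and
`exp x ≤ 1 + x + x ^ 2` for `|x| ≤ 1` bounds it below by `-e / n ^ 2 ≥ -1 / n ^ 2`. -/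

open Real

lemma neg_sq_le_mul_one_add_sub_exp {e x : ℝ} (he0 : 0 ≤ e) (he1 : e ≤ 1) (hx : |x| ≤ 1) :
    -x ^ 2 ≤ e * (1 + x - exp x) := by
  have hexp : exp x - 1 - x ≤ x ^ 2 := (abs_le.mp (abs_exp_sub_one_sub_id_le hx)).2
  nlinarith [sq_nonneg x]

theorem stmt_14_general (n k : ℕ) (hn : 1 ≤ n)
    (hk2 : k ≤ n) :
    (1 - (1 - Real.exp ((k - 1 : ℝ)/n - 1))) / n
      - (1 - Real.exp ((k - 1 : ℝ)/n - 1))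
      + (1 - Real.exp ((k : ℝ)/n - 1))
    ≥ -1 / n ^ 2 := by
  have hn0 : (0 : ℝ) < n := by exact_mod_cast hn
  set e := exp ((k - 1 : ℝ) / n - 1) with he
  have he1 : e ≤ 1 := by
    rw [he, exp_le_one_iff, sub_nonpos, div_le_one hn0]
    linarith [(Nat.cast_le (α := ℝ)).mpr hk2]
  have hx : |(1 : ℝ) / n| ≤ 1 := by
    rw [abs_of_nonneg (by positivity), div_le_one hn0]
    exact_mod_cast hn
  have hsplit : exp ((k : ℝ) / n - 1) = e * exp (1 / n) := by
    rw [he, ← exp_add]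
    ring_nf
  have hlower := neg_sq_le_mul_one_add_sub_exp (exp_pos _).le he1 hx
  rw [hsplit, ge_iff_le]
  convert hlower using 1 <;> ring

theorem stmt_14 (a : ℝ) (ha : a ∈ Set.Ico (0:ℝ) 1) (n k : ℕ) (hn : 1 ≤ n)
    (hk1 : (n : ℝ) * (1 + Real.log (1 - a)) + 1 < k) (hk2 : k ≤ n) :
    (1 - (1 - Real.exp ((k - 1 : ℝ)/n - 1))) / n
      - (1 - Real.exp ((k - 1 : ℝ)/n - 1))
      + (1 - Real.exp ((k : ℝ)/n - 1))
    ≥ -1 / n ^ 2 :=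
  stmt_14_general n k hn hk2
end

section
/- For the choice of parameters a = 1 - 1.31/e, c = 0.98, d = 0.62, g = 0.88, with h = (c·a - 1 + d)/(a - 1 + d) and b = g·ln(1-h)/ln(1-g), the following all hold: a·c + d > 1, h > 0.92, 1 < b < 1.08, and each of the three quantities (i) 1/c - (1/c - a)·(e(1-a))^{-c}, (ii) 1 - (d/e)·((b+d-bd)/d)^{1/b}, and (iii) h(1-d) + (1/2 - (b-g)/3)·(c·a - (1-d) - (a-1+d)(b-g)) + (1/2)(1 - (b-g)/3)·d, is strictly greater than 1 - 1/e + 1/400. -/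
/-!
Every claim is a strict inequality between explicit reals with some slack, so it suffices to
enclose each transcendental ingredient in a narrow interval. Values of `exp` on `[-1, 1]` are
enclosed by Taylor polynomials of degree 9 with an explicit remainder bound; logarithms of numbers
far below `1` are reduced to that range by the shift `log y = log (y * e³) - 3`; and powers are
written as `x ^ y = exp (y * log x)`. The parameter `b` is only enclosed in `(1.0745, 1.075)`;
this suffices for the second quantity because its two occurrences of `b` can be bounded
separately, each at its worst endpoint.
-/

open Real Finset Set
open scoped Nat

lemma exp_lt_of_taylor_lt {x y : ℝ} (n : ℕ) (hn : 0 < n) (hx : |x| ≤ 1)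
    (h : ∑ i ∈ range n, x ^ i / (i ! : ℝ) + |x| ^ n * ((n + 1) / (n ! * n)) < y) :
    exp x < y := by
  have := (abs_le.mp (exp_bound hx hn)).2
  push_cast at this
  linarith

lemma lt_exp_of_lt_taylor {x y : ℝ} (n : ℕ) (hn : 0 < n) (hx : |x| ≤ 1)
    (h : y < ∑ i ∈ range n, x ^ i / (i ! : ℝ) - |x| ^ n * ((n + 1) / (n ! * n))) :
    y < exp x := by
  have := (abs_le.mp (exp_bound hx hn)).1
  push_cast at this
  linarith

lemma lt_log_of_exp_add_lt {x y k : ℝ} (hy : 0 < y) (h : exp (x + k) < y * exp k) :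
    x < log y := by
  rw [lt_log_iff_exp_lt hy]
  rw [exp_add] at h
  exact lt_of_mul_lt_mul_right h (exp_pos k).le

lemma log_lt_of_lt_exp_add {x y k : ℝ} (hy : 0 < y) (h : y * exp k < exp (x + k)) :
    log y < x := by
  rw [log_lt_iff_lt_exp hy]
  rw [exp_add] at h
  exact lt_of_mul_lt_mul_right h (exp_pos k).le

lemma exp_three_mem : exp 3 ∈ Ioo (20.0855369 : ℝ) 20.085537 := by
  have hpow : exp 1 ^ 3 = exp 3 := by rw [exp_one_pow]; norm_num
  rw [← hpow]
  constructor
  · calc (20.0855369 : ℝ) < 2.7182818283 ^ 3 := by norm_num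
      _ < exp 1 ^ 3 := pow_lt_pow_left₀ exp_one_gt_d9 (by norm_num) (by norm_num)
  · calc exp 1 ^ 3 < 2.7182818286 ^ 3 :=
          pow_lt_pow_left₀ exp_one_lt_d9 (exp_pos 1).le (by norm_num)
      _ < 20.085537 := by norm_num

lemma one_sub_one_div_exp_one_add_lt : 1 - 1 / exp 1 + 1 / 400 < (0.634621 : ℝ) := by
  have : (0.36787944 : ℝ) < 1 / exp 1 := by
    rw [lt_div_iff₀ (exp_pos 1)]
    linarith [exp_one_lt_d9]
  linarith

lemma log_twelve_hundredths_mem : log 0.12 ∈ Ioo (-2.1203 : ℝ) (-2.1202) := by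
  obtain ⟨he3l, he3u⟩ := exp_three_mem
  constructor
  · refine lt_log_of_exp_add_lt (k := 3) (by norm_num) ?_
    calc exp (-2.1203 + 3) < 0.12 * 20.0855369 :=
          exp_lt_of_taylor_lt 10 (by norm_num) (by norm_num [abs_of_nonneg])
            (by norm_num [sum_range_succ, Nat.factorial, abs_of_nonneg])
      _ < 0.12 * exp 3 := by linarith
  · refine log_lt_of_lt_exp_add (k := 3) (by norm_num) ?_
    calc 0.12 * exp 3 < 0.12 * 20.085537 := by linarith
      _ < exp (-2.1202 + 3) :=
          lt_exp_of_lt_taylor 10 (by norm_num) (by norm_num [abs_of_nonneg])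
            (by norm_num [sum_range_succ, Nat.factorial, abs_of_nonneg])

noncomputable def paramA : ℝ := 1 - 1.31 / exp 1

noncomputable def paramH : ℝ := (0.98 * paramA - 1 + 0.62) / (paramA - 1 + 0.62)

noncomputable def paramB : ℝ := 0.88 * log (1 - paramH) / log (1 - 0.88)

lemma paramA_mem : paramA ∈ Ioo (0.518077 : ℝ) 0.518078 := by
  have hl : (0.481922 : ℝ) < 1.31 / exp 1 := by
    rw [lt_div_iff₀ (exp_pos 1)]
    linarith [exp_one_lt_d9]
  have hu : 1.31 / exp 1 < (0.481923 : ℝ) := by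
    rw [div_lt_iff₀ (exp_pos 1)]
    linarith [exp_one_gt_d9]
  exact ⟨by unfold paramA; linarith, by unfold paramA; linarith⟩

lemma one_sub_paramH_eq : 1 - paramH = 0.02 * paramA / (paramA - 0.38) := by
  have hden : paramA - 1 + 0.62 = paramA - 0.38 := by ring
  have hne : paramA - 0.38 ≠ 0 := by linarith [paramA_mem.1]
  rw [paramH, hden]
  field_simp
  ring

lemma one_sub_paramH_mem : 1 - paramH ∈ Ioo (0.0750413 : ℝ) 0.0750418 := by
  obtain ⟨hal, hau⟩ := paramA_mem
  have hpos : (0 : ℝ) < paramA - 0.38 := by linarith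
  rw [one_sub_paramH_eq]
  exact ⟨by rw [lt_div_iff₀ hpos]; linarith, by rw [div_lt_iff₀ hpos]; linarith⟩

lemma log_one_sub_paramH_mem : log (1 - paramH) ∈ Ioo (-2.5898 : ℝ) (-2.5897) := by
  obtain ⟨hwl, hwu⟩ := one_sub_paramH_mem
  obtain ⟨he3l, he3u⟩ := exp_three_mem
  have hwe3l : 0.0750413 * 20.0855369 < (1 - paramH) * exp 3 := by nlinarith
  have hwe3u : (1 - paramH) * exp 3 < 0.0750418 * 20.085537 := by nlinarith
  constructor
  · refine lt_log_of_exp_add_lt (k := 3) (by linarith) ?_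
    calc exp (-2.5898 + 3) < 0.0750413 * 20.0855369 :=
          exp_lt_of_taylor_lt 10 (by norm_num) (by norm_num [abs_of_nonneg])
            (by norm_num [sum_range_succ, Nat.factorial, abs_of_nonneg])
      _ < (1 - paramH) * exp 3 := hwe3l
  · refine log_lt_of_lt_exp_add (k := 3) (by linarith) ?_
    calc (1 - paramH) * exp 3 < 0.0750418 * 20.085537 := hwe3u
      _ < exp (-2.5897 + 3) :=
          lt_exp_of_lt_taylor 10 (by norm_num) (by norm_num [abs_of_nonneg])
            (by norm_num [sum_range_succ, Nat.factorial, abs_of_nonneg])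

lemma paramB_mem : paramB ∈ Ioo (1.0745 : ℝ) 1.075 := by
  obtain ⟨hL1l, hL1u⟩ := log_one_sub_paramH_mem
  obtain ⟨hL2l, hL2u⟩ := log_twelve_hundredths_mem
  have hL2 : log (1 - 0.88) = log 0.12 := by norm_num
  have hneg : log (0.12 : ℝ) < 0 := by linarith
  rw [paramB, hL2]
  exact ⟨by rw [lt_div_iff_of_neg hneg]; linarith, by rw [div_lt_iff_of_neg hneg]; linarith⟩

lemma first_ratio_gt :
    1 / 0.98 - (1 / 0.98 - paramA) * (exp 1 * (1 - paramA)) ^ (-0.98 : ℝ)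
      > 1 - 1 / exp 1 + 1 / 400 := by
  have hea : exp 1 * (1 - paramA) = 1.31 := by
    unfold paramA
    field_simp
    ring
  have hlog : 0.27 < log 1.31 := by
    rw [lt_log_iff_exp_lt (by norm_num)]
    exact exp_lt_of_taylor_lt 10 (by norm_num) (by norm_num [abs_of_nonneg])
      (by norm_num [sum_range_succ, Nat.factorial, abs_of_nonneg])
  have hpow : (1.31 : ℝ) ^ (-0.98 : ℝ) < 0.76753 := by
    rw [rpow_def_of_pos (by norm_num)]
    calc exp (log 1.31 * -0.98) < exp (-0.2646) := exp_lt_exp.mpr (by linarith)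
      _ < 0.76753 := exp_lt_of_taylor_lt 10 (by norm_num) (by norm_num [abs_of_nonpos])
          (by norm_num [sum_range_succ, Nat.factorial, abs_of_nonpos])
  have hpos : (0 : ℝ) < (1.31 : ℝ) ^ (-0.98 : ℝ) := by positivity
  have hprod :
      (1 / 0.98 - paramA) * (1.31 : ℝ) ^ (-0.98 : ℝ) < (1 / 0.98 - 0.518077) * 0.76753 :=
    mul_lt_mul'' (by linarith [paramA_mem.1]) hpow (by linarith [paramA_mem.2]) hpos.le
  rw [hea]
  linarith [one_sub_one_div_exp_one_add_lt]

lemma second_ratio_gt {b : ℝ} (hb : b ∈ Ioo (1.0745 : ℝ) 1.075) :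
    1 - (0.62 / exp 1) * ((b + 0.62 - b * 0.62) / 0.62) ^ (1 / b) > 1 - 1 / exp 1 + 1 / 400 := by
  obtain ⟨hbl, hbu⟩ := hb
  set Z := (b + 0.62 - b * 0.62) / 0.62 with hZ
  have hZpos : 0 < Z := div_pos (by linarith) (by norm_num)
  have hZu : Z < 1.6589 := by rw [hZ, div_lt_iff₀ (by norm_num)]; linarith
  have hlogZ : log Z < 0.5062 := by
    rw [log_lt_iff_lt_exp hZpos]
    exact hZu.trans (lt_exp_of_lt_taylor 10 (by norm_num) (by norm_num [abs_of_nonneg])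
      (by norm_num [sum_range_succ, Nat.factorial, abs_of_nonneg]))
  have hexpo : log Z * (1 / b) < 0.47111 := by
    rw [mul_one_div, div_lt_iff₀ (by linarith)]
    linarith
  have hY : Z ^ (1 / b) < 1.6018 := by
    rw [rpow_def_of_pos hZpos]
    exact (exp_lt_exp.mpr hexpo).trans (exp_lt_of_taylor_lt 10 (by norm_num)
      (by norm_num [abs_of_nonneg]) (by norm_num [sum_range_succ, Nat.factorial, abs_of_nonneg]))
  have hsplit : 1 - (0.62 / exp 1) * Z ^ (1 / b)
      = 1 - 1 / exp 1 + (1 - 0.62 * Z ^ (1 / b)) / exp 1 := by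
    field_simp
    ring
  have hgap : 1 / 400 < (1 - 0.62 * Z ^ (1 / b)) / exp 1 := by
    rw [lt_div_iff₀ (exp_pos 1)]
    linarith [exp_one_lt_d9]
  rw [hsplit]
  linarith

lemma third_ratio_gt {a b h : ℝ} (ha : a ∈ Ioo (0.518077 : ℝ) 0.518078)
    (hb : b ∈ Ioo (1.0745 : ℝ) 1.075) (hh : h > 0.92) :
    h * (1 - 0.62)
        + (1 / 2 - (b - 0.88) / 3) * (0.98 * a - (1 - 0.62) - (a - 1 + 0.62) * (b - 0.88))
        + (1 / 2) * (1 - (b - 0.88) / 3) * 0.62 > 1 - 1 / exp 1 + 1 / 400 := by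
  obtain ⟨hal, hau⟩ := ha
  obtain ⟨hbl, hbu⟩ := hb
  have hprod : (a - 1 + 0.62) * (b - 0.88) < 0.139 * 0.195 :=
    mul_lt_mul'' (by linarith) (by linarith) (by linarith) (by linarith)
  have hmid : 0.435 * 0.1 < (1 / 2 - (b - 0.88) / 3)
      * (0.98 * a - (1 - 0.62) - (a - 1 + 0.62) * (b - 0.88)) :=
    mul_lt_mul'' (by linarith) (by linarith) (by norm_num) (by norm_num)
  linarith [one_sub_one_div_exp_one_add_lt]

theorem stmt_15 :
    let e : ℝ := Real.exp 1
    let a : ℝ := 1 - 1.31 / e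
    let c : ℝ := 0.98
    let d : ℝ := 0.62
    let g : ℝ := 0.88
    let h : ℝ := (c * a - 1 + d) / (a - 1 + d)
    let b : ℝ := g * Real.log (1 - h) / Real.log (1 - g)
    a * c + d > 1 ∧ h > 0.92 ∧ 1 < b ∧ b < 1.08 ∧
    1/c - (1/c - a) * (e * (1 - a)) ^ (-c) > 1 - 1/e + 1/400 ∧
    1 - (d/e) * ((b + d - b*d)/d) ^ (1/b) > 1 - 1/e + 1/400 ∧
    h * (1 - d) + (1/2 - (b - g)/3) * (c*a - (1 - d) - (a - 1 + d)*(b - g))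
      + (1/2) * (1 - (b - g)/3) * d > 1 - 1/e + 1/400 := by
  intro e a c d g h b
  have hh : paramH > 0.92 := by linarith [one_sub_paramH_mem.2]
  have hac : paramA * 0.98 + 0.62 > 1 := by linarith [paramA_mem.1]
  exact ⟨hac, hh, lt_trans (by norm_num) paramB_mem.1,
    paramB_mem.2.trans (by norm_num), first_ratio_gt, second_ratio_gt paramB_mem,
    third_ratio_gt paramA_mem paramB_mem hh⟩
end
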